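/- Let A, B be n×n positive definite complex matrices (n ≥ 1), τ ∈ (0,1) and t ∈ (0,1) with t ≤ min{τ, 1-τ} or t ≥ max{τ, 1-τ}. Then det(A ∇ B)^{1/n} ≥ det(!_t(A,B))^{1/n} + (t(1-t)/(τ(1-τ)))·det(A ∇ B - !_τ(A,B))^{1/n}. -/

import Mathlib

/-!
Write `A = W Wᴴ` and `B = W diag(e) Wᴴ`. All three means commute with the congruence
`X ↦ W X Wᴴ`, so each is `W diag(·) Wᴴ` of the corresponding scalar mean of `1` and the `eᵢ`,
and each determinant carries the same factor `|det W|²`. For scalars,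
`1 ∇ x - !_s(1, x) = p (x - 1)² (x + 1) / (2 (p (x - 1)² + x))` with `p = s (1 - s)`; divided by
`p` this decreases in `p`, and the hypothesis on `t, τ` says exactly `t (1 - t) ≤ τ (1 - τ)`.
This gives the inequality eigenvalue by eigenvalue, and the superadditivity of
`x ↦ (∏ xᵢ)^(1/n)` on nonnegative vectors (weighted AM-GM) lifts it to determinants.
-/

open Matrix ComplexOrder

/-- The weighted matrix harmonic mean `A !_t B = ((1-t)A⁻¹ + tB⁻¹)⁻¹`. -/
noncomputable def mharm {n : ℕ} (t : ℝ) (A B : Matrix (Fin n) (Fin n) ℂ) :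
    Matrix (Fin n) (Fin n) ℂ :=
  (((1 - t : ℝ) : ℂ) • A⁻¹ + ((t : ℝ) : ℂ) • B⁻¹)⁻¹

/-- The harmonic Heinz matrix mean `!_t(A,B) = (A !_t B + A !_{1-t} B)/2`. -/
noncomputable def mheinz {n : ℕ} (t : ℝ) (A B : Matrix (Fin n) (Fin n) ℂ) :
    Matrix (Fin n) (Fin n) ℂ :=
  (2 : ℂ)⁻¹ • (mharm t A B + mharm (1 - t) A B)

/-- The matrix arithmetic mean `A ∇ B = (A + B)/2`. -/
noncomputable def marith {n : ℕ} (A B : Matrix (Fin n) (Fin n) ℂ) :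
    Matrix (Fin n) (Fin n) ℂ :=
  (2 : ℂ)⁻¹ • (A + B)

-- `1 !_s x`, `!_s(1, x)` and `1 ∇ x`.
noncomputable def harmOne (s x : ℝ) : ℝ := ((1 - s) + s * x⁻¹)⁻¹

noncomputable def heinzOne (s x : ℝ) : ℝ := (harmOne s x + harmOne (1 - s) x) / 2

noncomputable def arithOne (x : ℝ) : ℝ := (1 + x) / 2

section Scalar

variable {s t τ x : ℝ}

lemma harmOne_denom_pos (hx : 0 < x) (hs : s ∈ Set.Icc (0 : ℝ) 1) :
    0 < (1 - s) + s * x⁻¹ := by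
  rcases hs.1.eq_or_lt with rfl | hs₀
  · norm_num
  · exact add_pos_of_nonneg_of_pos (sub_nonneg.2 hs.2) (by positivity)

lemma harmOne_eq (hx : x ≠ 0) : harmOne s x = x / ((1 - s) * x + s) := by
  rw [harmOne, ← inv_div]
  congr 1
  field_simp

lemma heinzOne_eq (hx : 0 < x) (hs : s ∈ Set.Icc (0 : ℝ) 1) :
    heinzOne s x = x * (x + 1) / (2 * (s * (1 - s) * (x - 1) ^ 2 + x)) := by
  obtain ⟨hs0, hs1⟩ := hs
  have h₁ : (1 - s) * x + s ≠ 0 := by nlinarith [mul_nonneg (sub_nonneg.2 hs1) (sq_nonneg x)]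
  have h₂ : s * x + (1 - s) ≠ 0 := by nlinarith [mul_nonneg hs0 (sq_nonneg x)]
  have h₃ : s * (1 - s) * (x - 1) ^ 2 + x ≠ 0 := by
    nlinarith [mul_nonneg (mul_nonneg hs0 (sub_nonneg.2 hs1)) (sq_nonneg (x - 1))]
  rw [heinzOne, harmOne_eq hx.ne', harmOne_eq hx.ne', sub_sub_cancel,
    div_add_div _ _ h₁ h₂, div_div, div_eq_div_iff (by positivity) (by positivity)]
  ring

lemma arithOne_sub_heinzOne (hx : 0 < x) (hs : s ∈ Set.Icc (0 : ℝ) 1) :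
    arithOne x - heinzOne s x
      = s * (1 - s) * ((x - 1) ^ 2 * (x + 1)) / (2 * (s * (1 - s) * (x - 1) ^ 2 + x)) := by
  have h₃ : s * (1 - s) * (x - 1) ^ 2 + x ≠ 0 := by
    nlinarith [mul_nonneg (mul_nonneg hs.1 (sub_nonneg.2 hs.2)) (sq_nonneg (x - 1))]
  rw [heinzOne_eq hx hs, arithOne]
  field_simp
  ring

lemma heinzOne_nonneg (hx : 0 < x) (hs : s ∈ Set.Icc (0 : ℝ) 1) : 0 ≤ heinzOne s x := by
  have : 0 ≤ s * (1 - s) := mul_nonneg hs.1 (sub_nonneg.2 hs.2)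
  rw [heinzOne_eq hx hs]
  positivity

lemma arithOne_sub_heinzOne_nonneg (hx : 0 < x) (hs : s ∈ Set.Icc (0 : ℝ) 1) :
    0 ≤ arithOne x - heinzOne s x := by
  have : 0 ≤ s * (1 - s) := mul_nonneg hs.1 (sub_nonneg.2 hs.2)
  rw [arithOne_sub_heinzOne hx hs]
  positivity

lemma heinzOne_add_le (hx : 0 < x) (ht : t ∈ Set.Icc (0 : ℝ) 1)
    (hτ : τ ∈ Set.Ioo (0 : ℝ) 1) (hpq : t * (1 - t) ≤ τ * (1 - τ)) :
    heinzOne t x + t * (1 - t) / (τ * (1 - τ)) * (arithOne x - heinzOne τ x) ≤ arithOne x := by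
  have hp : 0 ≤ t * (1 - t) := mul_nonneg ht.1 (sub_nonneg.2 ht.2)
  have hτ₀ : τ ≠ 0 := hτ.1.ne'
  have hτ₁ : 1 - τ ≠ 0 := (sub_pos.2 hτ.2).ne'
  suffices t * (1 - t) / (τ * (1 - τ)) * (arithOne x - heinzOne τ x)
      ≤ arithOne x - heinzOne t x by linarith
  rw [arithOne_sub_heinzOne hx ht, arithOne_sub_heinzOne hx (Set.Ioo_subset_Icc_self hτ)]
  calc _ = t * (1 - t) * ((x - 1) ^ 2 * (x + 1)) / (2 * (τ * (1 - τ) * (x - 1) ^ 2 + x)) := by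
        field_simp
    _ ≤ _ := by gcongr

end Scalar

section GeomMean

open Finset

variable {ι : Type*} [Fintype ι]

lemma prod_rpow_inv_card_le_mul_sum [Nonempty ι] {u z : ι → ℝ} (hu : ∀ i, 0 ≤ u i)
    (hz : ∀ i, 0 < z i) :
    (∏ i, u i) ^ (Fintype.card ι : ℝ)⁻¹
      ≤ (∏ i, z i) ^ (Fintype.card ι : ℝ)⁻¹
        * ∑ i, (Fintype.card ι : ℝ)⁻¹ * (u i / z i) := by
  have hZ : 0 ≤ ∏ i, z i := prod_nonneg fun i _ => (hz i).le
  have hq : ∀ i ∈ univ, 0 ≤ u i / z i := fun i _ => div_nonneg (hu i) (hz i).le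
  have hu_eq : ∏ i, u i = (∏ i, z i) * ∏ i, u i / z i := by
    rw [← prod_mul_distrib]
    exact prod_congr rfl fun i _ => (mul_div_cancel₀ _ (hz i).ne').symm
  rw [hu_eq, Real.mul_rpow hZ (prod_nonneg hq), ← Real.finsetProd_rpow _ _ hq]
  gcongr
  exact Real.geom_mean_le_arith_mean_weighted univ _ _ (fun i _ => by positivity) (by simp) hq

lemma prod_rpow_inv_card_add_le [Nonempty ι] {x y : ι → ℝ} (hx : ∀ i, 0 ≤ x i)
    (hy : ∀ i, 0 ≤ y i) :
    (∏ i, x i) ^ (Fintype.card ι : ℝ)⁻¹ + (∏ i, y i) ^ (Fintype.card ι : ℝ)⁻¹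
      ≤ (∏ i, (x i + y i)) ^ (Fintype.card ι : ℝ)⁻¹ := by
  set r := (Fintype.card ι : ℝ)⁻¹
  by_cases hz : ∀ i, 0 < x i + y i
  · have hsum : ∑ i, r * (x i / (x i + y i)) + ∑ i, r * (y i / (x i + y i)) = 1 := by
      rw [← sum_add_distrib]
      simp_rw [← mul_add, ← add_div, div_self (hz _).ne', mul_one]
      simp [r]
    calc _ ≤ (∏ i, (x i + y i)) ^ r * ∑ i, r * (x i / (x i + y i))
          + (∏ i, (x i + y i)) ^ r * ∑ i, r * (y i / (x i + y i)) :=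
          add_le_add (prod_rpow_inv_card_le_mul_sum hx hz) (prod_rpow_inv_card_le_mul_sum hy hz)
      _ = _ := by rw [← mul_add, hsum, mul_one]
  · simp only [not_forall, not_lt] at hz
    obtain ⟨i, hi⟩ := hz
    have hxi : x i = 0 := le_antisymm (by linarith [hy i]) (hx i)
    have hyi : y i = 0 := le_antisymm (by linarith [hx i]) (hy i)
    have hr : r ≠ 0 := by positivity
    rw [prod_eq_zero (mem_univ i) hxi, prod_eq_zero (mem_univ i) hyi,
      prod_eq_zero (mem_univ i) (by rw [hxi, hyi, add_zero]), Real.zero_rpow hr, add_zero]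

lemma prod_rpow_inv_card_add_mul_le [Nonempty ι] {x w z : ι → ℝ} {c : ℝ} (hx : ∀ i, 0 ≤ x i)
    (hw : ∀ i, 0 ≤ w i) (hc : 0 ≤ c) (hxz : ∀ i, x i + c * w i ≤ z i) :
    (∏ i, x i) ^ (Fintype.card ι : ℝ)⁻¹ + c * (∏ i, w i) ^ (Fintype.card ι : ℝ)⁻¹
      ≤ (∏ i, z i) ^ (Fintype.card ι : ℝ)⁻¹ := by
  have hcw : ∀ i, 0 ≤ c * w i := fun i => mul_nonneg hc (hw i)
  have hmul : c * (∏ i, w i) ^ (Fintype.card ι : ℝ)⁻¹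
      = (∏ i, c * w i) ^ (Fintype.card ι : ℝ)⁻¹ := by
    rw [prod_mul_distrib, prod_const, card_univ,
      Real.mul_rpow (pow_nonneg hc _) (prod_nonneg fun i _ => hw i),
      Real.pow_rpow_inv_natCast hc Fintype.card_ne_zero]
  rw [hmul]
  calc _ ≤ (∏ i, (x i + c * w i)) ^ (Fintype.card ι : ℝ)⁻¹ :=
        prod_rpow_inv_card_add_le hx hcw
    _ ≤ _ := by
      gcongr with i
      · exact prod_nonneg fun i _ => add_nonneg (hx i) (hcw i)
      · exact fun i _ => add_nonneg (hx i) (hcw i)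
      · exact hxz i

end GeomMean

section Congruence

variable {ι : Type*} [Fintype ι] [DecidableEq ι]

lemma Matrix.inv_diagonal_of_ne_zero {K : Type*} [Field K] {v : ι → K} (hv : ∀ i, v i ≠ 0) :
    (diagonal v)⁻¹ = diagonal v⁻¹ := by
  refine inv_eq_right_inv ?_
  rw [diagonal_mul_diagonal, ← diagonal_one]
  exact congrArg diagonal (funext fun i => mul_inv_cancel₀ (hv i))

lemma Matrix.smul_mul_mul_add_smul_mul_mul {R : Type*} [CommRing R] (P Q X Y : Matrix ι ι R)
    (a b : R) :
    a • (P * X * Q) + b • (P * Y * Q) = P * (a • X + b • Y) * Q := by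
  simp only [mul_add, add_mul, mul_smul_comm, smul_mul_assoc]

lemma Matrix.det_mul_mul_conjTranspose (W X : Matrix ι ι ℂ) :
    (W * X * Wᴴ).det = (Complex.normSq W.det : ℂ) * X.det := by
  rw [det_mul, det_mul, det_conjTranspose, mul_right_comm, Complex.star_def, Complex.mul_conj]

lemma Matrix.re_det_mul_diagonal_mul_conjTranspose_rpow (W : Matrix ι ι ℂ) {f : ι → ℝ}
    (hf : ∀ i, 0 ≤ f i) (r : ℝ) :
    (W * diagonal (fun i => (f i : ℂ)) * Wᴴ).det.re ^ r
      = Complex.normSq W.det ^ r * (∏ i, f i) ^ r := by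
  rw [det_mul_mul_conjTranspose, det_diagonal, ← Complex.ofReal_prod, ← Complex.ofReal_mul,
    Complex.ofReal_re,
    Real.mul_rpow (Complex.normSq_nonneg _) (Finset.prod_nonneg fun i _ => hf i)]

lemma Matrix.PosDef.exists_simultaneous_diagonalization {A B : Matrix ι ι ℂ}
    (hA : A.PosDef) (hB : B.PosDef) :
    ∃ (W : Matrix ι ι ℂ) (e : ι → ℝ), IsUnit W ∧ (∀ i, 0 < e i) ∧
      A = W * Wᴴ ∧ B = W * diagonal (fun i => (e i : ℂ)) * Wᴴ := by
  -- `W = A^(1/2) U`, where `U` diagonalizes `A^(-1/2) B A^(-1/2)`.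
  obtain ⟨S, hSH, hSS⟩ : ∃ S : Matrix ι ι ℂ, Sᴴ = S ∧ S * S = A := by
    open scoped MatrixOrder in
    exact ⟨CFC.sqrt A, (CFC.sqrt_nonneg A).posSemidef.1,
      CFC.sqrt_mul_sqrt_self A hA.posSemidef.nonneg⟩
  have hS : IsUnit S := isUnit_of_mul_isUnit_left (hSS ▸ hA.isUnit)
  have hZ : (S⁻¹ * B * S⁻¹).PosDef := by
    simpa [conjTranspose_nonsing_inv, hSH] using
      hB.conjTranspose_mul_mul_same (mulVec_injective_of_isUnit (isUnit_nonsing_inv_iff.mpr hS))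
  set U : Matrix ι ι ℂ := (hZ.1.eigenvectorUnitary : Matrix ι ι ℂ)
  have hUU : U * Uᴴ = 1 := Unitary.mul_star_self_of_mem hZ.1.eigenvectorUnitary.2
  refine ⟨S * U, hZ.1.eigenvalues, hS.mul Unitary.isUnit_coe, hZ.eigenvalues_pos, ?_, ?_⟩
  · rw [conjTranspose_mul, hSH, mul_assoc, ← mul_assoc U, hUU, one_mul, hSS]
  · have hspec := hZ.1.spectral_theorem
    rw [Unitary.conjStarAlgAut_apply] at hspec
    have hSd := (isUnit_iff_isUnit_det S).mp hS
    calc B = S * (S⁻¹ * B * S⁻¹) * S := by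
          simp only [← mul_assoc, mul_nonsing_inv _ hSd, one_mul]
          rw [mul_assoc, nonsing_inv_mul _ hSd, mul_one]
      _ = S * (U * diagonal (fun i => (hZ.1.eigenvalues i : ℂ)) * Uᴴ) * S :=
          congrArg (fun M => S * M * S) hspec
      _ = _ := by rw [conjTranspose_mul, hSH]; simp only [mul_assoc]

end Congruence

section Means

variable {n : ℕ}

lemma mharm_conj {W : Matrix (Fin n) (Fin n) ℂ} (hW : IsUnit W) (s : ℝ)
    (A B : Matrix (Fin n) (Fin n) ℂ) :
    mharm s (W * A * Wᴴ) (W * B * Wᴴ) = W * mharm s A B * Wᴴ := by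
  have hWd := (isUnit_iff_isUnit_det W).mp hW
  have hWHd : IsUnit Wᴴ.det := by rw [det_conjTranspose]; exact hWd.star
  simp only [mharm, Matrix.mul_inv_rev, ← mul_assoc, smul_mul_mul_add_smul_mul_mul,
    nonsing_inv_nonsing_inv _ hWd, nonsing_inv_nonsing_inv _ hWHd]

lemma mheinz_conj {W : Matrix (Fin n) (Fin n) ℂ} (hW : IsUnit W) (s : ℝ)
    (A B : Matrix (Fin n) (Fin n) ℂ) :
    mheinz s (W * A * Wᴴ) (W * B * Wᴴ) = W * mheinz s A B * Wᴴ := by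
  simp only [mheinz, mharm_conj hW, mul_add, add_mul, mul_smul_comm, smul_mul_assoc]

lemma marith_conj (W A B : Matrix (Fin n) (Fin n) ℂ) :
    marith (W * A * Wᴴ) (W * B * Wᴴ) = W * marith A B * Wᴴ := by
  simp only [marith, mul_add, add_mul, mul_smul_comm, smul_mul_assoc]

variable {e : Fin n → ℝ} {s : ℝ}

lemma mharm_one_diagonal (he : ∀ i, 0 < e i) (hs : s ∈ Set.Icc (0 : ℝ) 1) :
    mharm s 1 (diagonal fun i => (e i : ℂ)) = diagonal fun i => (harmOne s (e i) : ℂ) := by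
  have hsum : ((1 - s : ℝ) : ℂ) • (1 : Matrix (Fin n) (Fin n) ℂ)
      + (s : ℂ) • diagonal (fun i => (e i : ℂ))⁻¹
      = diagonal fun i => (((1 - s) + s * (e i)⁻¹ : ℝ) : ℂ) := by
    rw [← diagonal_one, ← diagonal_smul, ← diagonal_smul, diagonal_add]
    refine congrArg diagonal (funext fun i => ?_)
    simp only [Pi.smul_apply, Pi.inv_apply, smul_eq_mul]
    push_cast
    ring
  rw [mharm, inv_one, inv_diagonal_of_ne_zero fun i => Complex.ofReal_ne_zero.2 (he i).ne',
    hsum,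
    inv_diagonal_of_ne_zero fun i => Complex.ofReal_ne_zero.2 (harmOne_denom_pos (he i) hs).ne']
  simp only [harmOne, Complex.ofReal_inv]
  rfl

lemma mheinz_one_diagonal (he : ∀ i, 0 < e i) (hs : s ∈ Set.Icc (0 : ℝ) 1) :
    mheinz s 1 (diagonal fun i => (e i : ℂ)) = diagonal fun i => (heinzOne s (e i) : ℂ) := by
  have hs' : 1 - s ∈ Set.Icc (0 : ℝ) 1 := ⟨sub_nonneg.2 hs.2, sub_le_self _ hs.1⟩
  rw [mheinz, mharm_one_diagonal he hs, mharm_one_diagonal he hs', diagonal_add, ← diagonal_smul]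
  refine congrArg diagonal (funext fun i => ?_)
  simp only [Pi.smul_apply, smul_eq_mul, heinzOne]
  push_cast
  ring

lemma marith_one_diagonal :
    marith 1 (diagonal fun i => (e i : ℂ)) = diagonal fun i => (arithOne (e i) : ℂ) := by
  rw [marith, ← diagonal_one, diagonal_add, ← diagonal_smul]
  refine congrArg diagonal (funext fun i => ?_)
  simp only [Pi.smul_apply, smul_eq_mul, arithOne]
  push_cast
  ring

end Means

theorem stmt_18 {n : ℕ} (hn : 1 ≤ n) (A B : Matrix (Fin n) (Fin n) ℂ)
    (hA : A.PosDef) (hB : B.PosDef) (τ t : ℝ)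
    (hτ : τ ∈ Set.Ioo (0 : ℝ) 1) (ht : t ∈ Set.Ioo (0 : ℝ) 1)
    (h : t ≤ min τ (1 - τ) ∨ t ≥ max τ (1 - τ)) :
    (mheinz t A B).det.re ^ ((1 : ℝ) / n)
      + (t * (1 - t) / (τ * (1 - τ))) * (marith A B - mheinz τ A B).det.re ^ ((1 : ℝ) / n)
      ≤ (marith A B).det.re ^ ((1 : ℝ) / n) := by
  have hpq : t * (1 - t) ≤ τ * (1 - τ) := by
    rcases h with h | h
    · nlinarith [le_min_iff.mp h]
    · nlinarith [max_le_iff.mp h]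
  have ht' := Set.Ioo_subset_Icc_self ht
  have hτ' := Set.Ioo_subset_Icc_self hτ
  obtain ⟨W, e, hW, he, rfl, rfl⟩ := hA.exists_simultaneous_diagonalization hB
  have : Nonempty (Fin n) := ⟨⟨0, hn⟩⟩
  have hc : 0 ≤ t * (1 - t) / (τ * (1 - τ)) :=
    div_nonneg (mul_nonneg ht'.1 (sub_nonneg.2 ht'.2)) (mul_nonneg hτ'.1 (sub_nonneg.2 hτ'.2))
  rw [show W * Wᴴ = W * 1 * Wᴴ by rw [mul_one], mheinz_conj hW, mheinz_conj hW, marith_conj,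
    ← sub_mul, ← mul_sub, mheinz_one_diagonal he ht', mheinz_one_diagonal he hτ',
    marith_one_diagonal, diagonal_sub]
  simp only [← Complex.ofReal_sub]
  have hx i : 0 ≤ heinzOne t (e i) := heinzOne_nonneg (he i) ht'
  have hw i : 0 ≤ arithOne (e i) - heinzOne τ (e i) := arithOne_sub_heinzOne_nonneg (he i) hτ'
  have hz i : 0 ≤ arithOne (e i) := by linarith [hx i, hw i, heinzOne_nonneg (he i) hτ']
  rw [re_det_mul_diagonal_mul_conjTranspose_rpow W hx,
    re_det_mul_diagonal_mul_conjTranspose_rpow W hw,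
    re_det_mul_diagonal_mul_conjTranspose_rpow W hz,
    mul_left_comm _ (Complex.normSq W.det ^ _), ← mul_add]
  refine mul_le_mul_of_nonneg_left ?_ (Real.rpow_nonneg (Complex.normSq_nonneg _) _)
  simpa only [Fintype.card_fin, one_div] using
    prod_rpow_inv_card_add_mul_le hx hw hc fun i => heinzOne_add_le (he i) ht' hτ hpq
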